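/- arXiv:2507.04169 — 14 statements merged into one kernel-verified Lean document; each statement's English description precedes it below -/
import Mathlib

section
/- Let m ≥ 9 and let S be the numerical semigroup generated by m, m+1, ..., 2m-5. Then the set of pseudo-Frobenius numbers of S is {2m-4, 2m-3, 2m-2, 2m-1}; in particular the type of S is 4. -/
/-!
When `3 a ≤ 2 b + 1`, the intervals `[q a, q b]` with `q ≥ 2` overlap, so the semigroup generated
by `[a, b]` is `{0} ∪ [a, b] ∪ [2 a, ∞)`. A gap `P < a` is then pushed by a suitable generator into
the gap `(b, 2 a)`, so the pseudo-Frobenius numbers are exactly the elements of `(b, 2 a)`.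
For `a = m`, `b = 2 m - 5` the overlap condition is `m ≥ 9`.
-/

open Set

def pseudoFrobenius (S : Set ℕ) : Set ℕ :=
  {P | P ∉ S ∧ ∀ s ∈ S, s ≠ 0 → P + s ∈ S}

theorem mem_closure_Icc_iff {a b n : ℕ} :
    n ∈ AddSubmonoid.closure (Icc a b) ↔ ∃ q, q * a ≤ n ∧ n ≤ q * b := by
  constructor
  · intro h
    induction h using AddSubmonoid.closure_induction with
    | mem x hx => exact ⟨1, by simpa using hx⟩
    | zero => exact ⟨0, by simp⟩
    | add x y _ _ hx hy =>
      obtain ⟨q, hqx⟩ := hx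
      obtain ⟨r, hry⟩ := hy
      exact ⟨q + r, by rw [add_mul, add_mul]; omega⟩
  · rintro ⟨q, hq⟩
    induction q generalizing n with
    | zero => simp_all
    | succ q ih =>
      have hab : a ≤ b := le_of_mul_le_mul_left (hq.1.trans hq.2) q.succ_pos
      rw [add_one_mul, add_one_mul] at hq
      -- peel off the largest generator `x` that still leaves `n - x ≥ q a`
      have hsplit : n = min b (n - q * a) + (n - min b (n - q * a)) := by omega
      rw [hsplit]
      refine add_mem (AddSubmonoid.subset_closure ⟨by omega, by omega⟩) (ih ⟨by omega, ?_⟩)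
      have : q * a ≤ q * b := Nat.mul_le_mul_left q hab
      omega

theorem mem_closure_Icc_of_two_mul_le {a b n : ℕ} (ha : 0 < a) (hab : 3 * a ≤ 2 * b + 1)
    (hn : 2 * a ≤ n) : n ∈ AddSubmonoid.closure (Icc a b) := by
  refine mem_closure_Icc_iff.2 ⟨n / a, Nat.div_mul_le_self n a, ?_⟩
  have hq : 2 ≤ n / a := (Nat.le_div_iff_mul_le ha).2 hn
  have hlt : n < a * (n / a + 1) := Nat.lt_mul_div_succ n ha
  nlinarith

theorem mem_closure_Icc_iff_of_three_mul_le {a b n : ℕ} (ha : 0 < a) (hab : 3 * a ≤ 2 * b + 1) :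
    n ∈ AddSubmonoid.closure (Icc a b) ↔ n = 0 ∨ a ≤ n ∧ n ≤ b ∨ 2 * a ≤ n := by
  constructor
  · rw [mem_closure_Icc_iff]
    rintro ⟨q, hqa, hqb⟩
    rcases q with _ | _ | q
    · simp_all
    · simp_all
    · right; right; nlinarith
  · rintro (rfl | h | h)
    · exact zero_mem _
    · exact AddSubmonoid.subset_closure h
    · exact mem_closure_Icc_of_two_mul_le ha hab h

theorem pseudoFrobenius_closure_Icc {a b : ℕ} (hab : 3 * a ≤ 2 * b + 1)
    (hgap : b + 2 ≤ 2 * a) :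
    pseudoFrobenius (AddSubmonoid.closure (Icc a b)) = Icc (b + 1) (2 * a - 1) := by
  have ha : 0 < a := by omega
  ext P
  simp only [pseudoFrobenius, mem_ofPred_eq, SetLike.mem_coe,
    mem_closure_Icc_iff_of_three_mul_le ha hab, mem_Icc]
  constructor
  · rintro ⟨hP, hPF⟩
    by_contra hout
    have := hPF (max a (b + 1 - P)) (by omega) (by omega)
    omega
  · intro hP
    exact ⟨by omega, fun s hs _ => by omega⟩

theorem stmt_2 (m : ℕ) (hm : 9 ≤ m)
    (S : Set ℕ)
    (hS : S = {n : ℕ | n ∈ AddSubmonoid.closure (Set.Icc m (2 * m - 5))}) :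
    {P : ℕ | P ∉ S ∧ ∀ s ∈ S, s ≠ 0 → P + s ∈ S} =
      ({2 * m - 4, 2 * m - 3, 2 * m - 2, 2 * m - 1} : Set ℕ) ∧
    {P : ℕ | P ∉ S ∧ ∀ s ∈ S, s ≠ 0 → P + s ∈ S}.ncard = 4 := by
  subst hS
  change pseudoFrobenius (AddSubmonoid.closure (Icc m (2 * m - 5))) = _ ∧
    (pseudoFrobenius (AddSubmonoid.closure (Icc m (2 * m - 5)))).ncard = 4
  rw [pseudoFrobenius_closure_Icc (by omega) (by omega), ncard_Icc_nat]
  refine ⟨?_, by omega⟩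
  ext P
  simp only [mem_Icc, mem_insert_iff, mem_singleton_iff]
  omega
end

section
/- Let k ≥ 4 and S = ⟨2k+1, 2k+2, ..., 3k+1⟩. Then the gaps of S are {1, 2, ..., 2k} ∪ {3k+2, ..., 4k+1}; in particular the Frobenius number of S is 4k+1. -/
/-!
An element of the submonoid generated by the interval `[a, b]` is a sum of `m` generators, so
it lies in `[m a, m b]`, and every point of such an interval is reached.  For `a = 2k + 1`,
`b = 3k + 1` the intervals with `m = 0, 1` leave the gaps `[1, 2k]` and `[3k + 2, 4k + 1]`,
while from `m = 2` on consecutive intervals `[m a, m b]` and `[(m + 1) a, (m + 1) b]` touch,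
so everything from `4k + 2` on is in the semigroup.
-/

namespace AddSubmonoid

variable {a b n : ℕ}

theorem mem_closure_Icc_iff :
    n ∈ closure (Set.Icc a b) ↔ ∃ m, m * a ≤ n ∧ n ≤ m * b := by
  constructor
  · intro h
    induction h using closure_induction with
    | mem x hx => exact ⟨1, by simpa using hx.1, by simpa using hx.2⟩
    | zero => exact ⟨0, by simp, by simp⟩
    | add x y _ _ hx hy =>
      obtain ⟨m₁, hx₁, hx₂⟩ := hx
      obtain ⟨m₂, hy₁, hy₂⟩ := hy
      exact ⟨m₁ + m₂, by rw [add_mul]; omega, by rw [add_mul]; omega⟩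
  · rintro ⟨m, hlo, hhi⟩
    induction m generalizing n with
    | zero => simp [show n = 0 by simpa using hhi]
    | succ m ih =>
      rw [add_one_mul] at hlo hhi
      have hab : a ≤ b := by
        by_contra! h
        have : m * b ≤ m * a := Nat.mul_le_mul_left m h.le
        omega
      -- split off one generator `x`, as large as needed for the rest to fit under `m * b`
      set x := max a (n - m * b)
      have hx : x ∈ Set.Icc a b := ⟨le_max_left _ _, max_le hab (by omega)⟩
      have hrest : m * a ≤ n - x ∧ n - x ≤ m * b := by
        have : m * a ≤ m * b := Nat.mul_le_mul_left m hab
        constructor <;> omega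
      rw [show n = x + (n - x) by omega]
      exact add_mem (subset_closure hx) (ih hrest.1 hrest.2)

theorem mem_closure_Icc_iff_of_lt_two_mul (hn : n < 2 * a) :
    n ∈ closure (Set.Icc a b) ↔ n = 0 ∨ n ∈ Set.Icc a b := by
  rw [mem_closure_Icc_iff]
  constructor
  · rintro ⟨m, hlo, hhi⟩
    rcases m with _ | _ | m
    · simp_all
    · simp_all
    · nlinarith
  · rintro (rfl | ⟨hlo, hhi⟩)
    · exact ⟨0, by simp, by simp⟩
    · exact ⟨1, by simpa using hlo, by simpa using hhi⟩

theorem mem_closure_Icc_of_mul_le {m₀ : ℕ} (ha : 0 < a) (hab : a ≤ b)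
    (hcover : (m₀ + 1) * a ≤ m₀ * b + 1) (hn : m₀ * a ≤ n) :
    n ∈ closure (Set.Icc a b) := by
  rw [mem_closure_Icc_iff]
  set m := n / a
  have hm : m₀ ≤ m := (Nat.le_div_iff_mul_le ha).2 hn
  have hlt : n < (m + 1) * a := by
    rw [add_one_mul]
    exact Nat.lt_div_mul_add ha
  refine ⟨m, Nat.div_mul_le_self n a, ?_⟩
  obtain ⟨d, hd⟩ := Nat.exists_eq_add_of_le hm
  rw [hd] at hlt ⊢
  have : d * a ≤ d * b := Nat.mul_le_mul_left d hab
  nlinarith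

end AddSubmonoid

open AddSubmonoid in
theorem stmt_3 (k : ℕ) (hk : 4 ≤ k)
    (S : Set ℕ)
    (hS : S = {n : ℕ | n ∈ AddSubmonoid.closure (Set.Icc (2 * k + 1) (3 * k + 1))}) :
    {n : ℕ | 0 < n ∧ n ∉ S} =
      Set.Icc 1 (2 * k) ∪ Set.Icc (3 * k + 2) (4 * k + 1) ∧
    IsGreatest {n : ℕ | n ∉ S} (4 * k + 1) := by
  have hgap : ∀ n, n ∉ S ↔ n ∈ Set.Icc 1 (2 * k) ∪ Set.Icc (3 * k + 2) (4 * k + 1) := by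
    intro n
    subst hS
    rcases lt_or_ge n (4 * k + 2) with hn | hn
    · simp only [Set.mem_ofPred_eq, mem_closure_Icc_iff_of_lt_two_mul (show n < 2 * (2 * k + 1) by omega),
        Set.mem_union, Set.mem_Icc]
      omega
    · have hmem := mem_closure_Icc_of_mul_le (m₀ := 2) (b := 3 * k + 1) (by omega) (by omega)
        (by ring_nf; omega) (show 2 * (2 * k + 1) ≤ n by omega)
      simp only [Set.mem_ofPred_eq, hmem, not_true_eq_false, Set.mem_union, Set.mem_Icc, false_iff]
      omega
  refine ⟨?_, ?_, fun n hn => ?_⟩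
  · ext n
    simp only [Set.mem_ofPred_eq, hgap, Set.mem_union, Set.mem_Icc]
    omega
  · simp only [Set.mem_ofPred_eq, hgap, Set.mem_union, Set.mem_Icc]
    omega
  · simp only [Set.mem_ofPred_eq, hgap, Set.mem_union, Set.mem_Icc] at hn
    omega
end

section
/- Let S be a numerical semigroup with Frobenius number F. For any numerical set T with T + S ⊆ T satisfying S ⊆ T ⊆ S ∪ M(S), the partition λ(T) has size |λ(T)| = |λ(S)| + |A| − |B|, where A = {(i,h) : i ∈ T \ S, h ∉ T, 0 ≤ h, i < h} and B = {(s,i) : s ∈ S, i ∈ T \ S, s < i}. -/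
/-- The size of the partition associated to a numerical set `T`:
the number of pairs `(u, x)` with `u ∈ T`, `x ∉ T`, `u < x`. -/
noncomputable def lamSize (T : Set ℕ) : ℕ :=
  {p : ℕ × ℕ | p.1 ∈ T ∧ p.2 ∉ T ∧ p.1 < p.2}.ncard

theorem stmt_4 (S T : Set ℕ) (F : ℕ)
    (h0 : 0 ∈ S) (hadd : ∀ a ∈ S, ∀ b ∈ S, a + b ∈ S)
    (hfin : {n : ℕ | n ∉ S}.Finite)
    (hF : IsGreatest {n : ℕ | n ∉ S} F)
    (hST : S ⊆ T)
    (hTM : T ⊆ S ∪ {x : ℕ | x ∉ S ∧ F - x ∉ S})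
    (hclosed : ∀ t ∈ T, ∀ s ∈ S, t + s ∈ T) :
    (lamSize T : ℤ) = (lamSize S : ℤ)
      + ({p : ℕ × ℕ | p.1 ∈ T ∧ p.1 ∉ S ∧ p.2 ∉ T ∧ p.1 < p.2}.ncard : ℤ)
      - ({p : ℕ × ℕ | p.1 ∈ S ∧ p.2 ∈ T ∧ p.2 ∉ S ∧ p.1 < p.2}.ncard : ℤ) := by
  classical
  set A : Set (ℕ × ℕ) := {p : ℕ × ℕ | p.1 ∈ T ∧ p.1 ∉ S ∧ p.2 ∉ T ∧ p.1 < p.2} with hA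
  set B : Set (ℕ × ℕ) := {p : ℕ × ℕ | p.1 ∈ S ∧ p.2 ∈ T ∧ p.2 ∉ S ∧ p.1 < p.2} with hB
  set C : Set (ℕ × ℕ) := {p : ℕ × ℕ | p.1 ∈ S ∧ p.2 ∉ T ∧ p.1 < p.2} with hC
  have hbig : (Set.Iic F ×ˢ Set.Iic F : Set (ℕ × ℕ)).Finite :=
    (Set.finite_Iic F).prod (Set.finite_Iic F)
  have key : ∀ p : ℕ × ℕ, p.2 ∉ S → p.1 < p.2 → p ∈ (Set.Iic F ×ˢ Set.Iic F : Set (ℕ × ℕ)) := by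
    rintro ⟨a, b⟩ hb hab
    have hbF : b ≤ F := hF.2 hb
    exact ⟨le_trans (le_of_lt hab) hbF, hbF⟩
  have hnotT : ∀ x : ℕ, x ∉ T → x ∉ S := fun x hx hxS => hx (hST hxS)
  have hAfin : A.Finite := hbig.subset (fun p hp => key p (hnotT _ hp.2.2.1) hp.2.2.2)
  have hBfin : B.Finite := hbig.subset (fun p hp => key p hp.2.2.1 hp.2.2.2)
  have hCfin : C.Finite := hbig.subset (fun p hp => key p (hnotT _ hp.2.1) hp.2.2)
  have eqT : {p : ℕ × ℕ | p.1 ∈ T ∧ p.2 ∉ T ∧ p.1 < p.2} = C ∪ A := by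
    ext ⟨a, b⟩
    simp only [Set.mem_setOf_eq, Set.mem_union, hA, hC]
    constructor
    · rintro ⟨haT, hbT, hab⟩
      by_cases haS : a ∈ S
      · exact Or.inl ⟨haS, hbT, hab⟩
      · exact Or.inr ⟨haT, haS, hbT, hab⟩
    · rintro (⟨haS, hbT, hab⟩ | ⟨haT, _, hbT, hab⟩)
      · exact ⟨hST haS, hbT, hab⟩
      · exact ⟨haT, hbT, hab⟩
  have eqS : {p : ℕ × ℕ | p.1 ∈ S ∧ p.2 ∉ S ∧ p.1 < p.2} = C ∪ B := by
    ext ⟨a, b⟩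
    simp only [Set.mem_setOf_eq, Set.mem_union, hB, hC]
    constructor
    · rintro ⟨haS, hbS, hab⟩
      by_cases hbT : b ∈ T
      · exact Or.inr ⟨haS, hbT, hbS, hab⟩
      · exact Or.inl ⟨haS, hbT, hab⟩
    · rintro (⟨haS, hbT, hab⟩ | ⟨haS, _, hbS, hab⟩)
      · exact ⟨haS, hnotT _ hbT, hab⟩
      · exact ⟨haS, hbS, hab⟩
  have hdCA : Disjoint C A := by
    rw [Set.disjoint_left]
    rintro ⟨a, b⟩ hp hq
    exact hq.2.1 hp.1
  have hdCB : Disjoint C B := by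
    rw [Set.disjoint_left]
    rintro ⟨a, b⟩ hp hq
    exact hp.2.1 hq.2.1
  have hT : lamSize T = C.ncard + A.ncard := by
    rw [lamSize, eqT, Set.ncard_union_eq hdCA hCfin hAfin]
  have hS : lamSize S = C.ncard + B.ncard := by
    rw [lamSize, eqS, Set.ncard_union_eq hdCB hCfin hBfin]
  rw [hT, hS]
  push_cast
  ring
end

section
/- Let S be a numerical semigroup with Frobenius number F, and let I ⊆ M(S) be a self-dual order ideal of the void poset (i.e., x ∈ I implies F − x ∈ I). Then |λ(S)| ≤ |λ(S ∪ I)|, where |λ(T)| = #{(u,x) : u ∈ T, x ∉ T, x ≥ 0, u < x}. -/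
theorem stmt_5 (S : Set ℕ) (F : ℕ) (I : Set ℕ)
    (h0 : 0 ∈ S) (hadd : ∀ a ∈ S, ∀ b ∈ S, a + b ∈ S)
    (hfin : {n : ℕ | n ∉ S}.Finite)
    (hF : IsGreatest {n : ℕ | n ∉ S} F)
    (hIM : I ⊆ {x : ℕ | x ∉ S ∧ F - x ∉ S})
    (hideal : ∀ x ∈ I, ∀ y ∈ {x : ℕ | x ∉ S ∧ F - x ∉ S},
      x ≤ y → y - x ∈ S → y ∈ I)
    (hselfdual : ∀ x ∈ I, F - x ∈ I) :
    lamSize S ≤ lamSize (S ∪ I) := by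
  have hFS : F ∉ S := hF.1
  have hgap : ∀ x, x ∉ S → x ≤ F := fun x hx => hF.2 hx
  have hIS : ∀ x ∈ I, x ∉ S := fun x hx => (hIM hx).1
  set A : Set (ℕ × ℕ) := {p | p.1 ∈ S ∧ p.2 ∈ I ∧ p.1 < p.2} with hA
  set B : Set (ℕ × ℕ) := {p | p.1 ∈ I ∧ p.2 ∉ S ∪ I ∧ p.1 < p.2} with hB
  set C : Set (ℕ × ℕ) := {p | p.1 ∈ S ∧ p.2 ∉ S ∪ I ∧ p.1 < p.2} with hC
  -- finiteness box
  have hboxfin : (Set.Iic F ×ˢ Set.Iic F : Set (ℕ × ℕ)).Finite :=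
    (Set.finite_Iic F).prod (Set.finite_Iic F)
  have hsub : ∀ p : ℕ × ℕ, p.2 ∉ S → p.1 < p.2 →
      p ∈ (Set.Iic F ×ˢ Set.Iic F : Set (ℕ × ℕ)) := by
    intro p h2 hlt
    have h2F := hgap _ h2
    exact ⟨by simp [Set.mem_Iic]; omega, by simp [Set.mem_Iic]; omega⟩
  have hAfin : A.Finite := hboxfin.subset (by
    intro p hp; exact hsub p (hIS _ hp.2.1) hp.2.2)
  have hBfin : B.Finite := hboxfin.subset (by
    intro p hp; exact hsub p (fun h => hp.2.1 (Or.inl h)) hp.2.2)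
  have hCfin : C.Finite := hboxfin.subset (by
    intro p hp; exact hsub p (fun h => hp.2.1 (Or.inl h)) hp.2.2)
  -- decompositions
  have hdecS : {p : ℕ × ℕ | p.1 ∈ S ∧ p.2 ∉ S ∧ p.1 < p.2} = C ∪ A := by
    ext p
    simp only [hA, hC, Set.mem_setOf_eq, Set.mem_union]
    constructor
    · rintro ⟨h1, h2, h3⟩
      by_cases hI : p.2 ∈ I
      · exact Or.inr ⟨h1, hI, h3⟩
      · exact Or.inl ⟨h1, by rintro (h | h) <;> [exact h2 h; exact hI h], h3⟩
    · rintro (⟨h1, h2, h3⟩ | ⟨h1, h2, h3⟩)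
      · exact ⟨h1, fun h => h2 (Or.inl h), h3⟩
      · exact ⟨h1, hIS _ h2, h3⟩
  have hdecT : {p : ℕ × ℕ | p.1 ∈ S ∪ I ∧ p.2 ∉ S ∪ I ∧ p.1 < p.2} = C ∪ B := by
    ext p
    simp only [hB, hC, Set.mem_setOf_eq, Set.mem_union]
    constructor
    · rintro ⟨h1 | h1, h2, h3⟩
      · exact Or.inl ⟨h1, h2, h3⟩
      · exact Or.inr ⟨h1, h2, h3⟩
    · rintro (⟨h1, h2, h3⟩ | ⟨h1, h2, h3⟩)
      · exact ⟨Or.inl h1, h2, h3⟩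
      · exact ⟨Or.inr h1, h2, h3⟩
  have hdisjA : Disjoint C A := by
    rw [Set.disjoint_left]
    rintro p ⟨_, h2, _⟩ ⟨_, hI, _⟩
    exact h2 (Or.inr hI)
  have hdisjB : Disjoint C B := by
    rw [Set.disjoint_left]
    rintro p ⟨h1, _, _⟩ ⟨hI, _, _⟩
    exact hIS _ hI h1
  -- key inequality via injection
  have hAB : A.ncard ≤ B.ncard := by
    apply Set.ncard_le_ncard_of_injOn (fun p => (F - p.2, F - p.1)) ?_ ?_ hBfin
    · rintro ⟨u, x⟩ ⟨hu, hx, hlt⟩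
      have hxF : x ≤ F := hgap _ (hIS _ hx)
      have huF : u < F := lt_of_lt_of_le hlt hxF
      have hFx : F - x ∈ I := hselfdual _ hx
      have hFuS : F - u ∉ S := by
        intro h
        have : u + (F - u) ∈ S := hadd _ hu _ h
        rw [Nat.add_sub_cancel' huF.le] at this
        exact hFS this
      have hFuI : F - u ∉ I := by
        intro h
        have := (hIM h).2
        rw [Nat.sub_sub_self huF.le] at this
        exact this hu
      refine ⟨hFx, by rintro (h | h) <;> [exact hFuS h; exact hFuI h], ?_⟩
      show F - x < F - u
      omega
    · rintro ⟨u1, x1⟩ ⟨hu1, hx1, hlt1⟩ ⟨u2, x2⟩ ⟨hu2, hx2, hlt2⟩ h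
      have h1 : x1 ≤ F := hgap _ (hIS _ hx1)
      have h2 : x2 ≤ F := hgap _ (hIS _ hx2)
      simp only [Prod.mk.injEq] at h ⊢
      omega
  -- conclude
  unfold lamSize
  rw [hdecS, hdecT, Set.ncard_union_eq hdisjA hCfin hAfin,
    Set.ncard_union_eq hdisjB hCfin hBfin]
  omega
end

section
/- Let S be a numerical semigroup with Frobenius number F. The maximal elements of the void poset (M(S), ≼) are exactly the elements of PF(S) \ {F}, and the minimal elements are exactly the elements F − P for P ∈ PF(S) \ {F}. -/
theorem stmt_6 (S : Set ℕ) (F : ℕ)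
    (h0 : 0 ∈ S) (hadd : ∀ a ∈ S, ∀ b ∈ S, a + b ∈ S)
    (hfin : {n : ℕ | n ∉ S}.Finite)
    (hF : IsGreatest {n : ℕ | n ∉ S} F) :
    (∀ x : ℕ,
      (x ∈ {y : ℕ | y ∉ S ∧ F - y ∉ S} ∧
        ∀ y ∈ {y : ℕ | y ∉ S ∧ F - y ∉ S}, x ≤ y → y - x ∈ S → y = x) ↔
      (x ∈ {P : ℕ | P ∉ S ∧ ∀ s ∈ S, s ≠ 0 → P + s ∈ S} ∧ x ≠ F)) ∧
    (∀ x : ℕ,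
      (x ∈ {y : ℕ | y ∉ S ∧ F - y ∉ S} ∧
        ∀ y ∈ {y : ℕ | y ∉ S ∧ F - y ∉ S}, y ≤ x → x - y ∈ S → y = x) ↔
      (∃ P ∈ {P : ℕ | P ∉ S ∧ ∀ s ∈ S, s ≠ 0 → P + s ∈ S}, P ≠ F ∧ x = F - P)) := by
  have hFS : F ∉ S := hF.1
  have hFle : ∀ n, n ∉ S → n ≤ F := fun n hn => hF.2 hn
  constructor
  · intro x
    constructor
    · rintro ⟨⟨hxS, hFxS⟩, hmax⟩
      have hxF : x ≤ F := hFle x hxS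
      have hxne : x ≠ F := by
        rintro rfl
        exact hFxS (by simpa using h0)
      refine ⟨⟨hxS, ?_⟩, hxne⟩
      intro s hs hs0
      by_contra hxs
      have h1 : x + s ≤ F := hFle _ hxs
      have h2 : F - (x + s) ∉ S := by
        intro hc
        have h3 : F - (x + s) + s ∈ S := hadd _ hc _ hs
        rw [show F - (x + s) + s = F - x by omega] at h3
        exact hFxS h3
      have := hmax (x + s) ⟨hxs, h2⟩ (by omega) (by simpa using hs)
      omega
    · rintro ⟨⟨hxS, hPF⟩, hxne⟩
      have hxF : x ≤ F := hFle x hxS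
      have hFxS : F - x ∉ S := by
        intro hc
        have h1 : x + (F - x) ∈ S := hPF _ hc (by omega)
        rw [show x + (F - x) = F by omega] at h1
        exact hFS h1
      refine ⟨⟨hxS, hFxS⟩, ?_⟩
      intro y hy hxy hyx
      by_contra hne
      have h1 : x + (y - x) ∈ S := hPF _ hyx (by omega)
      rw [show x + (y - x) = y by omega] at h1
      exact hy.1 h1
  · intro x
    constructor
    · rintro ⟨⟨hxS, hFxS⟩, hmin⟩
      have hxF : x ≤ F := hFle x hxS
      have hx0 : x ≠ 0 := by rintro rfl; exact hxS h0
      refine ⟨F - x, ⟨hFxS, ?_⟩, by omega, by omega⟩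
      intro s hs hs0
      by_contra hPs
      have h1 : F - x + s ≤ F := hFle _ hPs
      have hsx : s ≤ x := by omega
      have hyS : x - s ∉ S := by
        intro hc
        have : x - s + s ∈ S := hadd _ hc _ hs
        rw [show x - s + s = x by omega] at this
        exact hxS this
      have hyF : F - (x - s) ∉ S := by
        rw [show F - (x - s) = F - x + s by omega]
        exact hPs
      have := hmin (x - s) ⟨hyS, hyF⟩ (by omega) (by rw [show x - (x - s) = s by omega]; exact hs)
      omega
    · rintro ⟨P, ⟨hPS, hPF⟩, hPne, rfl⟩
      have hPF' : P ≤ F := hFle P hPS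
      have hPlt : P < F := lt_of_le_of_ne hPF' hPne
      have hxS : F - P ∉ S := by
        intro hc
        have h1 : P + (F - P) ∈ S := hPF _ hc (by omega)
        rw [show P + (F - P) = F by omega] at h1
        exact hFS h1
      refine ⟨⟨hxS, by rw [show F - (F - P) = P by omega]; exact hPS⟩, ?_⟩
      intro y hy hyx hs
      by_contra hne
      have h1 : P + (F - P - y) ∈ S := hPF _ hs (by omega)
      rw [show P + (F - P - y) = F - y by omega] at h1
      exact hy.2 h1
end

section
/- Let S be a numerical semigroup and I ⊆ M(S). Then S ⊆ A(S ∪ I) if and only if I is an order ideal of the void poset (M(S), ≼). -/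
theorem stmt_7 (S : Set ℕ) (F : ℕ) (I : Set ℕ)
    (h0 : 0 ∈ S) (hadd : ∀ a ∈ S, ∀ b ∈ S, a + b ∈ S)
    (hfin : {n : ℕ | n ∉ S}.Finite)
    (hF : IsGreatest {n : ℕ | n ∉ S} F)
    (hIM : I ⊆ {x : ℕ | x ∉ S ∧ F - x ∉ S}) :
    (S ⊆ {n : ℕ | ∀ t ∈ S ∪ I, n + t ∈ S ∪ I}) ↔
      (∀ x ∈ I, ∀ y ∈ {x : ℕ | x ∉ S ∧ F - x ∉ S},
        x ≤ y → y - x ∈ S → y ∈ I) := by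
  constructor
  · intro hA x hxI y hyM hxy hyx
    have := hA hyx x (Or.inr hxI)
    rw [Nat.sub_add_cancel hxy] at this
    rcases this with h | h
    · exact absurd h hyM.1
    · exact h
  · intro hI s hs t ht
    rcases ht with h | h
    · exact Or.inl (hadd s hs t h)
    · by_cases hst : s + t ∈ S
      · exact Or.inl hst
      · right
        have htM := hIM h
        have hle : s + t ≤ F := hF.2 hst
        have hFst : F - (s + t) ∉ S := by
          intro hc
          have heq : F - t = (F - (s + t)) + s := by omega
          exact htM.2 (heq ▸ hadd _ hc _ hs)
        exact hI t h (s + t) ⟨hst, hFst⟩ (Nat.le_add_left t s)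
          (by rw [Nat.add_sub_cancel]; exact hs)
end

section
/- Let S be a numerical semigroup with Frobenius number F, and let I be an order ideal of the void poset (M(S), ≼) such that the atom monoid of T = S ∪ I equals S. Then for each x ∈ I, either F − x ∈ I, or there exist y, z ∈ M(S) with x + y + z = F, y ∈ I, and F − z ∉ I. -/
theorem stmt_8 (S : Set ℕ) (F : ℕ) (I : Set ℕ)
    (h0 : 0 ∈ S) (hadd : ∀ a ∈ S, ∀ b ∈ S, a + b ∈ S)
    (hfin : {n : ℕ | n ∉ S}.Finite)
    (hF : IsGreatest {n : ℕ | n ∉ S} F)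
    (hIM : I ⊆ {x : ℕ | x ∉ S ∧ F - x ∉ S})
    (hideal : ∀ x ∈ I, ∀ y ∈ {x : ℕ | x ∉ S ∧ F - x ∉ S},
      x ≤ y → y - x ∈ S → y ∈ I)
    (hatom : {n : ℕ | ∀ t ∈ S ∪ I, n + t ∈ S ∪ I} = S) :
    ∀ x ∈ I, (F - x ∈ I) ∨
      ∃ y z : ℕ, y ∈ {x : ℕ | x ∉ S ∧ F - x ∉ S} ∧
        z ∈ {x : ℕ | x ∉ S ∧ F - x ∉ S} ∧
        x + y + z = F ∧ y ∈ I ∧ F - z ∉ I := by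
  intro x hx
  by_cases hFx : F - x ∈ I
  · exact Or.inl hFx
  right
  obtain ⟨hxS, hFxS⟩ := hIM hx
  have hxA : x ∉ {n : ℕ | ∀ t ∈ S ∪ I, n + t ∈ S ∪ I} := by rw [hatom]; exact hxS
  simp only [Set.mem_setOf_eq] at hxA
  push_neg at hxA
  obtain ⟨t, ht, hxt⟩ := hxA
  have hxF : x ≤ F := hF.2 hxS
  have hxtS : x + t ∉ S := fun h => hxt (Or.inl h)
  have hxtI : x + t ∉ I := fun h => hxt (Or.inr h)
  have hxtF : x + t ≤ F := hF.2 hxtS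
  have ht' : t ∈ I := by
    rcases ht with hts | hti
    · exfalso
      have hFxt : F - (x + t) ∉ S := by
        intro h
        apply hFxS
        have he : F - (x + t) + t = F - x := by omega
        have := hadd _ h _ hts
        rwa [he] at this
      exact hxtI (hideal x hx (x + t) ⟨hxtS, hFxt⟩ (Nat.le_add_right _ _)
        (by simpa using hts))
    · exact hti
  have htF : t ≤ F - x := by omega
  have hzS : F - (x + t) ∉ S := by
    intro hz
    apply hFx
    refine hideal t ht' (F - x) ⟨hFxS, ?_⟩ htF ?_
    · have : F - (F - x) = x := by omega
      rw [this]; exact hxS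
    · have : F - x - t = F - (x + t) := by omega
      rw [this]; exact hz
  refine ⟨t, F - (x + t), ⟨(hIM ht').1, (hIM ht').2⟩, ⟨hzS, ?_⟩, by omega, ht', ?_⟩
  · have : F - (F - (x + t)) = x + t := by omega
    rw [this]; exact hxtS
  · have : F - (F - (x + t)) = x + t := by omega
    rw [this]; exact hxtI
end

section
/- Let m ≥ 9 and S = ⟨m, m+1, ..., 2m-5⟩. Then |λ(S)| = 5m − 13, where |λ(S)| = #{(u,x) : u ∈ S, x ∉ S, x ≥ 0, u < x}. -/
section

variable {m : ℕ}

lemma mem_closure_Icc_of_two_mul_le_s10 (hm : 9 ≤ m) {n : ℕ} (hn : 2 * m ≤ n) :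
    n ∈ AddSubmonoid.closure (Set.Icc m (2 * m - 5)) := by
  have generator_mem {k : ℕ} (hk₁ : m ≤ k) (hk₂ : k ≤ 2 * m - 5) :
      k ∈ AddSubmonoid.closure (Set.Icc m (2 * m - 5)) :=
    AddSubmonoid.subset_closure ⟨hk₁, hk₂⟩
  induction n using Nat.strong_induction_on with
  | _ n ih =>
    -- Two generators sum to anything in `[2m, 4m-10]`; above that, `n - m ≥ 3m - 9 ≥ 2m`.
    by_cases hsmall : n ≤ 4 * m - 10
    · obtain ⟨j, k, hj, hk, rfl⟩ :
          ∃ j k, (m ≤ j ∧ j ≤ 2 * m - 5) ∧ (m ≤ k ∧ k ≤ 2 * m - 5) ∧ n = j + k :=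
        ⟨min (2 * m - 5) (n - m), n - min (2 * m - 5) (n - m), by omega, by omega, by omega⟩
      exact add_mem (generator_mem hj.1 hj.2) (generator_mem hk.1 hk.2)
    · obtain ⟨k, hk, rfl⟩ : ∃ k, 2 * m ≤ k ∧ n = m + k := ⟨n - m, by omega, by omega⟩
      exact add_mem (generator_mem le_rfl (by omega)) (ih k (by omega) hk)

lemma mem_closure_Icc_iff_s10 (hm : 9 ≤ m) (n : ℕ) :
    n ∈ AddSubmonoid.closure (Set.Icc m (2 * m - 5)) ↔
      n = 0 ∨ (m ≤ n ∧ n ≤ 2 * m - 5) ∨ 2 * m ≤ n := by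
  constructor
  · intro h
    induction h using AddSubmonoid.closure_induction with
    | mem x hx => exact Or.inr (Or.inl hx)
    | zero => exact Or.inl rfl
    | add x y _ _ hx hy => omega
  · rintro (rfl | h | h)
    · exact zero_mem _
    · exact AddSubmonoid.subset_closure h
    · exact mem_closure_Icc_of_two_mul_le_s10 hm h

def pairsBelowGap (m : ℕ) : Finset (ℕ × ℕ) :=
  {0} ×ˢ (Finset.Ico 1 m ∪ Finset.Ico (2 * m - 4) (2 * m)) ∪
    Finset.Ico m (2 * m - 4) ×ˢ Finset.Ico (2 * m - 4) (2 * m)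

lemma lamSize_eq_card_pairsBelowGap (hm : 3 ≤ m) {T : Set ℕ}
    (hT : ∀ n, n ∈ T ↔ n = 0 ∨ (m ≤ n ∧ n ≤ 2 * m - 5) ∨ 2 * m ≤ n) :
    lamSize T = (pairsBelowGap m).card := by
  rw [lamSize, pairsBelowGap, ← Set.ncard_coe_finset]
  congr 1
  ext ⟨u, x⟩
  simp only [Set.mem_ofPred_eq, hT, Finset.coe_union, Finset.coe_product, Finset.coe_singleton,
    Finset.coe_Ico, Set.mem_union, Set.mem_prod, Set.mem_singleton_iff, Set.mem_Ico]
  omega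

lemma card_pairsBelowGap (hm : 4 ≤ m) : (pairsBelowGap m).card = 5 * m - 13 := by
  have hsmall_large : Disjoint (Finset.Ico 1 m) (Finset.Ico (2 * m - 4) (2 * m)) :=
    Finset.disjoint_left.2 fun a ha hb => by simp only [Finset.mem_Ico] at ha hb; omega
  have hzero_rest : Disjoint ({0} ×ˢ (Finset.Ico 1 m ∪ Finset.Ico (2 * m - 4) (2 * m)))
      (Finset.Ico m (2 * m - 4) ×ˢ Finset.Ico (2 * m - 4) (2 * m)) :=
    Finset.disjoint_left.2 fun p hp hq => by simp only [Finset.mem_product] at hp hq; simp_all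
  rw [pairsBelowGap, Finset.card_union_of_disjoint hzero_rest, Finset.card_product,
    Finset.card_product, Finset.card_union_of_disjoint hsmall_large]
  simp only [Finset.card_singleton, Nat.card_Ico]
  rw [show 2 * m - (2 * m - 4) = 4 by omega, show 2 * m - 4 - m = m - 4 by omega]
  omega

end

theorem stmt_10 (m : ℕ) (hm : 9 ≤ m)
    (S : Set ℕ)
    (hS : S = {n : ℕ | n ∈ AddSubmonoid.closure (Set.Icc m (2 * m - 5))}) :
    lamSize S = 5 * m - 13 := by
  have hmem : ∀ n, n ∈ S ↔ n = 0 ∨ (m ≤ n ∧ n ≤ 2 * m - 5) ∨ 2 * m ≤ n :=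
    hS ▸ mem_closure_Icc_iff_s10 hm
  rw [lamSize_eq_card_pairsBelowGap (by omega) hmem, card_pairsBelowGap (by omega)]
end

section
/- Let m ≥ 9, S = ⟨m, m+1, ..., 2m-5⟩, and T = S ∪ {1, 2m−4, 2m−2}. Then the atom monoid of T equals S and |λ(T)| = 4m − 5 < 5m − 13 = |λ(S)|. In particular S is not λ-minimal. -/
/-- The atom monoid of a numerical set `T`. -/
def atomMonoid (T : Set ℕ) : Set ℕ := {n : ℕ | ∀ t ∈ T, n + t ∈ T}

private lemma ge_mem (m : ℕ) (hm : 9 ≤ m) :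
    ∀ n, 2 * m ≤ n → n ∈ AddSubmonoid.closure (Set.Icc m (2 * m - 5)) := by
  intro n
  induction n using Nat.strong_induction_on with
  | _ n ih =>
    intro hn
    by_cases h : n ≤ 4 * m - 10
    · rcases le_or_gt n (3 * m - 5) with h2 | h2
      · have hne : n = m + (n - m) := by omega
        rw [hne]
        exact add_mem (AddSubmonoid.subset_closure (Set.mem_Icc.mpr ⟨le_refl m, by omega⟩))
          (AddSubmonoid.subset_closure (Set.mem_Icc.mpr ⟨by omega, by omega⟩))
      · have hne : n = (2 * m - 5) + (n - (2 * m - 5)) := by omega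
        rw [hne]
        exact add_mem (AddSubmonoid.subset_closure (Set.mem_Icc.mpr ⟨by omega, le_refl _⟩))
          (AddSubmonoid.subset_closure (Set.mem_Icc.mpr ⟨by omega, by omega⟩))
    · have hne : n = m + (n - m) := by omega
      rw [hne]
      exact add_mem (AddSubmonoid.subset_closure (Set.mem_Icc.mpr ⟨le_refl _, by omega⟩))
        (ih (n - m) (by omega) (by omega))

private lemma clos_mem (m : ℕ) (hm : 9 ≤ m) (n : ℕ) :
    n ∈ AddSubmonoid.closure (Set.Icc m (2 * m - 5)) ↔
      (n = 0 ∨ (m ≤ n ∧ n ≤ 2 * m - 5) ∨ 2 * m ≤ n) := by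
  constructor
  · intro h
    let U : AddSubmonoid ℕ :=
      { carrier := {n | n = 0 ∨ (m ≤ n ∧ n ≤ 2 * m - 5) ∨ 2 * m ≤ n}
        zero_mem' := Or.inl rfl
        add_mem' := by
          intro a b ha hb
          simp only [Set.mem_setOf_eq] at *
          omega }
    have : AddSubmonoid.closure (Set.Icc m (2 * m - 5)) ≤ U := by
      rw [AddSubmonoid.closure_le]
      intro x hx
      simp only [Set.mem_Icc] at hx
      show x = 0 ∨ (m ≤ x ∧ x ≤ 2 * m - 5) ∨ 2 * m ≤ x
      omega
    exact this h
  · rintro (rfl | ⟨h1, h2⟩ | h)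
    · exact zero_mem _
    · exact AddSubmonoid.subset_closure (Set.mem_Icc.mpr ⟨h1, h2⟩)
    · exact ge_mem m hm n h

theorem stmt_11 (m : ℕ) (hm : 9 ≤ m)
    (S T : Set ℕ)
    (hS : S = {n : ℕ | n ∈ AddSubmonoid.closure (Set.Icc m (2 * m - 5))})
    (hT : T = S ∪ ({1, 2 * m - 4, 2 * m - 2} : Set ℕ)) :
    atomMonoid T = S ∧
    lamSize T = 4 * m - 5 ∧
    lamSize S = 5 * m - 13 ∧
    4 * m - 5 < 5 * m - 13 ∧
    ¬ (∀ T' : Set ℕ, 0 ∈ T' → {n : ℕ | n ∉ T'}.Finite →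
        atomMonoid T' = S → lamSize S ≤ lamSize T') := by
  have hSmem : ∀ n, n ∈ S ↔ (n = 0 ∨ (m ≤ n ∧ n ≤ 2 * m - 5) ∨ 2 * m ≤ n) := by
    intro n
    rw [hS]
    exact clos_mem m hm n
  have hTmem : ∀ n, n ∈ T ↔
      (n = 0 ∨ n = 1 ∨ (m ≤ n ∧ n ≤ 2 * m - 4) ∨ n = 2 * m - 2 ∨ 2 * m ≤ n) := by
    intro n
    rw [hT]
    simp only [Set.mem_union, Set.mem_insert_iff, Set.mem_singleton_iff, hSmem]
    omega
  -- atom monoid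
  have hAtom : atomMonoid T = S := by
    ext n
    simp only [atomMonoid, Set.mem_setOf_eq]
    constructor
    · intro h
      have h0 := h 0 ((hTmem 0).mpr (by omega))
      have h1 := h 1 ((hTmem 1).mpr (by omega))
      rw [hTmem] at h0 h1
      rw [hSmem]
      omega
    · intro hn t ht
      rw [hSmem] at hn
      rw [hTmem] at ht ⊢
      omega
  -- lamSize T
  have hcard01 : ({0, 1} : Finset ℕ).card = 2 := by decide
  have hLT : lamSize T = 4 * m - 5 := by
    classical
    set T1 : Finset ℕ := {0, 1} ∪ Finset.Icc m (2 * m - 4) with hT1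
    set T2 : Finset ℕ := insert (2 * m - 2) T1 with hT2
    set FT : Finset (ℕ × ℕ) :=
      (({0, 1} : Finset ℕ) ×ˢ Finset.Icc 2 (m - 1)) ∪ (T1 ×ˢ {2 * m - 3}) ∪ (T2 ×ˢ {2 * m - 1})
      with hFT
    have hset : {p : ℕ × ℕ | p.1 ∈ T ∧ p.2 ∉ T ∧ p.1 < p.2} = ↑FT := by
      ext ⟨u, x⟩
      simp only [Set.mem_setOf_eq, hTmem, hFT, hT2, hT1, Finset.coe_union, Set.mem_union,
        Finset.coe_product, Set.mem_prod, Finset.coe_insert, Set.mem_insert_iff,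
        Finset.coe_singleton, Set.mem_singleton_iff, Finset.mem_coe, Finset.mem_insert,
        Finset.mem_union, Finset.mem_Icc, Finset.mem_singleton]
      omega
    have hT1card : T1.card = m - 1 := by
      rw [hT1, Finset.card_union_of_disjoint]
      · rw [hcard01, Nat.card_Icc]; omega
      · rw [Finset.disjoint_left]
        intro a ha hb
        simp only [Finset.mem_insert, Finset.mem_singleton] at ha
        simp only [Finset.mem_Icc] at hb
        omega
    have hT2card : T2.card = m := by
      rw [hT2, Finset.card_insert_of_notMem, hT1card]
      · omega
      · simp only [hT1, Finset.mem_union, Finset.mem_insert, Finset.mem_singleton,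
          Finset.mem_Icc]
        omega
    have hFTcard : FT.card = 4 * m - 5 := by
      rw [hFT, Finset.card_union_of_disjoint, Finset.card_union_of_disjoint]
      · rw [Finset.card_product, Finset.card_product, Finset.card_product, hcard01,
          hT1card, hT2card, Nat.card_Icc, Finset.card_singleton, Finset.card_singleton]
        omega
      · rw [Finset.disjoint_left]
        rintro ⟨a, b⟩ ha hb
        simp only [Finset.mem_product, Finset.mem_Icc, Finset.mem_singleton] at ha hb
        omega
      · rw [Finset.disjoint_left]
        rintro ⟨a, b⟩ ha hb
        simp only [Finset.mem_union, Finset.mem_product, Finset.mem_Icc,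
          Finset.mem_singleton] at ha hb
        omega
    rw [lamSize, hset, Set.ncard_coe_finset, hFTcard]
  -- lamSize S
  have hLS : lamSize S = 5 * m - 13 := by
    classical
    set S0 : Finset ℕ := insert 0 (Finset.Icc m (2 * m - 5)) with hS0
    set FS : Finset (ℕ × ℕ) :=
      (({0} : Finset ℕ) ×ˢ Finset.Icc 1 (m - 1)) ∪ (S0 ×ˢ Finset.Icc (2 * m - 4) (2 * m - 1))
      with hFS
    have hset : {p : ℕ × ℕ | p.1 ∈ S ∧ p.2 ∉ S ∧ p.1 < p.2} = ↑FS := by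
      ext ⟨u, x⟩
      simp only [Set.mem_setOf_eq, hSmem, hFS, hS0, Finset.coe_union, Set.mem_union,
        Finset.coe_product, Set.mem_prod, Finset.coe_insert, Set.mem_insert_iff,
        Finset.coe_singleton, Set.mem_singleton_iff, Finset.mem_coe, Finset.mem_insert,
        Finset.mem_singleton, Finset.mem_Icc]
      omega
    have hS0card : S0.card = m - 3 := by
      rw [hS0, Finset.card_insert_of_notMem]
      · rw [Nat.card_Icc]; omega
      · simp only [Finset.mem_Icc]; omega
    have hIcc4 : (Finset.Icc (2 * m - 4) (2 * m - 1)).card = 4 := by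
      rw [Nat.card_Icc]; omega
    have hFScard : FS.card = 5 * m - 13 := by
      rw [hFS, Finset.card_union_of_disjoint]
      · rw [Finset.card_product, Finset.card_product, Finset.card_singleton, hS0card,
          Nat.card_Icc, hIcc4]
        omega
      · rw [Finset.disjoint_left]
        rintro ⟨a, b⟩ ha hb
        simp only [Finset.mem_product, Finset.mem_Icc, Finset.mem_singleton] at ha hb
        omega
    rw [lamSize, hset, Set.ncard_coe_finset, hFScard]
  refine ⟨hAtom, hLT, hLS, by omega, ?_⟩
  intro hcon
  have h0T : (0 : ℕ) ∈ T := (hTmem 0).mpr (by omega)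
  have hfin : {n : ℕ | n ∉ T}.Finite := by
    apply (Set.finite_Iio (2 * m)).subset
    intro n hn
    simp only [Set.mem_setOf_eq] at hn
    simp only [Set.mem_Iio]
    by_contra hc
    exact hn ((hTmem n).mpr (by omega))
  have := hcon T h0T hfin hAtom
  omega
end

section
/- Let k ≥ 4 and S = ⟨2k+1, 2k+2, ..., 3k+1⟩. Then |λ(S)| = k² + 4k, where |λ(S)| = #{(u,x) : u ∈ S, x ∉ S, x ≥ 0, u < x}. -/
namespace Nat

theorem mem_closure_Icc_iff {a b n : ℕ} :
    n ∈ AddSubmonoid.closure (Set.Icc a b) ↔ ∃ m, m * a ≤ n ∧ n ≤ m * b := by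
  constructor
  · intro h
    induction h using AddSubmonoid.closure_induction with
    | mem x hx => exact ⟨1, by simpa using hx⟩
    | zero => exact ⟨0, by simp⟩
    | add x y _ _ ihx ihy =>
      obtain ⟨m₁, hx₁, hx₂⟩ := ihx
      obtain ⟨m₂, hy₁, hy₂⟩ := ihy
      exact ⟨m₁ + m₂, by rw [add_mul]; omega, by rw [add_mul]; omega⟩
  · rintro ⟨m, hm⟩
    induction m generalizing n with
    | zero => simp_all
    | succ m ih =>
      rw [succ_mul, succ_mul] at hm
      have hab : a ≤ b := by
        by_contra! hba
        have := Nat.mul_le_mul_left m hba.le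
        omega
      have hmab : m * a ≤ m * b := Nat.mul_le_mul_left m hab
      -- peel off one generator `g`, leaving `n - g ∈ [m a, m b]`
      have hg : min b (n - m * a) ∈ Set.Icc a b := by constructor <;> omega
      rw [show n = min b (n - m * a) + (n - min b (n - m * a)) by omega]
      exact add_mem (AddSubmonoid.subset_closure hg) (ih ⟨by omega, by omega⟩)

theorem mem_closure_Icc_two_mul_add_one_iff {k n : ℕ} :
    n ∈ AddSubmonoid.closure (Set.Icc (2 * k + 1) (3 * k + 1)) ↔
      n = 0 ∨ n ∈ Set.Icc (2 * k + 1) (3 * k + 1) ∨ 4 * k + 2 ≤ n := by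
  rw [mem_closure_Icc_iff]
  constructor
  · rintro ⟨_ | _ | m, h₁, h₂⟩
    · simp_all
    · simp_all
    · right; right; nlinarith
  · rintro (rfl | h | h)
    · exact ⟨0, by simp⟩
    · exact ⟨1, by simpa using h⟩
    · refine ⟨n / (2 * k + 1), Nat.div_mul_le_self _ _, ?_⟩
      have hm : 2 ≤ n / (2 * k + 1) := (Nat.le_div_iff_mul_le (by omega)).mpr (by omega)
      have hn : n < n / (2 * k + 1) * (2 * k + 1) + (2 * k + 1) := Nat.lt_div_mul_add (by omega)
      nlinarith

end Nat

theorem stmt_12_general (k : ℕ)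
    (S : Set ℕ)
    (hS : S = {n : ℕ | n ∈ AddSubmonoid.closure (Set.Icc (2 * k + 1) (3 * k + 1))}) :
    lamSize S = k ^ 2 + 4 * k := by
  have hpairs : {p : ℕ × ℕ | p.1 ∈ S ∧ p.2 ∉ S ∧ p.1 < p.2} =
      ↑(({0} ×ˢ (Finset.Icc 1 (2 * k) ∪ Finset.Icc (3 * k + 2) (4 * k + 1))) ∪
        Finset.Icc (2 * k + 1) (3 * k + 1) ×ˢ Finset.Icc (3 * k + 2) (4 * k + 1)) := by
    ext ⟨u, x⟩
    simp only [hS, Set.mem_ofPred_eq, Nat.mem_closure_Icc_two_mul_add_one_iff, Set.mem_Icc,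
      Finset.coe_union, Finset.coe_product, Finset.coe_singleton, Finset.coe_Icc,
      Set.mem_union, Set.mem_prod, Set.mem_singleton_iff]
    omega
  have hgaps : Disjoint (Finset.Icc 1 (2 * k)) (Finset.Icc (3 * k + 2) (4 * k + 1)) :=
    Finset.disjoint_left.mpr fun _ h₁ h₂ => by simp only [Finset.mem_Icc] at h₁ h₂; omega
  have hzero : Disjoint {0} (Finset.Icc (2 * k + 1) (3 * k + 1)) := by simp
  rw [lamSize, hpairs, Set.ncard_coe_finset,
    Finset.card_union_of_disjoint (Finset.disjoint_product.mpr (.inl hzero)),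
    Finset.card_product, Finset.card_product, Finset.card_union_of_disjoint hgaps]
  simp only [Finset.card_singleton, Nat.card_Icc, Nat.add_sub_cancel,
    show 4 * k + 2 - (3 * k + 2) = k by omega, show 3 * k + 2 - (2 * k + 1) = k + 1 by omega]
  ring

theorem stmt_12 (k : ℕ) (hk : 4 ≤ k)
    (S : Set ℕ)
    (hS : S = {n : ℕ | n ∈ AddSubmonoid.closure (Set.Icc (2 * k + 1) (3 * k + 1))}) :
    lamSize S = k ^ 2 + 4 * k :=
  stmt_12_general k S hS
end

section
/- Let m ≥ 2, k ≥ 1, and 1 ≤ s ≤ m−1, and let S = {0, m, 2m, ..., km} ∪ {n : n ≥ km + s + 1}. Then PF(S) = {(k−1)m + s + 1, ..., (k−1)m + m − 1} ∪ {km + 1, ..., km + s}; in particular the type of S is m − 1 and the Frobenius number is km + s. -/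
theorem stmt_15 (m k s : ℕ) (hm : 2 ≤ m) (hk : 1 ≤ k) (hs1 : 1 ≤ s) (hs2 : s ≤ m - 1)
    (S : Set ℕ)
    (hS : S = {n : ℕ | ∃ j ≤ k, n = j * m} ∪ {n : ℕ | k * m + s + 1 ≤ n}) :
    {P : ℕ | P ∉ S ∧ ∀ t ∈ S, t ≠ 0 → P + t ∈ S} =
      Set.Icc ((k - 1) * m + s + 1) ((k - 1) * m + (m - 1)) ∪
        Set.Icc (k * m + 1) (k * m + s) ∧
    {P : ℕ | P ∉ S ∧ ∀ t ∈ S, t ≠ 0 → P + t ∈ S}.ncard = m - 1 ∧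
    IsGreatest {n : ℕ | n ∉ S} (k * m + s) := by
  obtain ⟨k, rfl⟩ : ∃ k', k = k' + 1 := ⟨k - 1, by omega⟩
  have hkm : (k + 1) * m = k * m + m := by ring
  have hk1 : k + 1 - 1 = k := rfl
  have hre : (k + 1 - 1) * m = k * m := rfl
  have hsm : s + 1 ≤ m := by omega
  have hmem : ∀ n, n ∈ S ↔ ((∃ j ≤ k + 1, n = j * m) ∨ k * m + m + s + 1 ≤ n) := by
    intro n
    rw [hS]
    simp [Set.mem_union, Set.mem_setOf_eq, hkm]
  have hmul_le : ∀ j ≤ k + 1, j * m ≤ k * m + m := by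
    intro j hj
    calc j * m ≤ (k + 1) * m := Nat.mul_le_mul_right m hj
    _ = k * m + m := hkm
  have hnotmul : ∀ n, k * m < n → n < k * m + m → ¬(∃ j ≤ k + 1, n = j * m) := by
    rintro n h1 h2 ⟨j, hj, rfl⟩
    rcases Nat.lt_or_ge j (k + 1) with h | h
    · have : j * m ≤ k * m := Nat.mul_le_mul_right m (by omega)
      omega
    · have : j = k + 1 := by omega
      subst this
      omega
  have hmS : m ∈ S := (hmem m).2 (Or.inl ⟨1, by omega, (one_mul m).symm⟩)
  have hmin : ∀ t ∈ S, t ≠ 0 → m ≤ t := by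
    intro t ht htne
    rcases (hmem t).1 ht with ⟨j, hj, rfl⟩ | h
    · have hj1 : 1 ≤ j := by
        rcases Nat.eq_zero_or_pos j with h | h
        · simp [h] at htne
        · exact h
      calc m = 1 * m := (one_mul m).symm
      _ ≤ j * m := Nat.mul_le_mul_right m hj1
    · omega
  have hset : {P : ℕ | P ∉ S ∧ ∀ t ∈ S, t ≠ 0 → P + t ∈ S} =
      Set.Icc ((k + 1 - 1) * m + s + 1) ((k + 1 - 1) * m + (m - 1)) ∪
        Set.Icc ((k + 1) * m + 1) ((k + 1) * m + s) := by
    rw [hk1, hkm]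
    ext P
    simp only [Set.mem_setOf_eq, Set.mem_union, Set.mem_Icc]
    constructor
    · rintro ⟨hP, hprop⟩
      rw [hmem] at hP
      push_neg at hP
      obtain ⟨hP1, hP2⟩ := hP
      have hPm := hprop m hmS (by omega)
      rw [hmem] at hPm
      have hlow : k * m + s + 1 ≤ P := by
        rcases hPm with ⟨j, hj, heq⟩ | h
        · exfalso
          have hjne : j ≠ 0 := by
            rintro rfl
            rw [zero_mul] at heq
            omega
          obtain ⟨j', rfl⟩ : ∃ j', j = j' + 1 := ⟨j - 1, by omega⟩
          rw [Nat.succ_mul] at heq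
          have hPe : P = j' * m := Nat.add_right_cancel heq
          exact hP1 j' (by omega) hPe
        · omega
      rcases Nat.lt_or_ge P (k * m + m) with h | h
      · exact Or.inl ⟨hlow, by omega⟩
      · have : P ≠ k * m + m := by
          rintro rfl
          exact hP1 (k + 1) (le_refl _) hkm.symm
        exact Or.inr ⟨by omega, by omega⟩
    · rintro (⟨h1, h2⟩ | ⟨h1, h2⟩)
      · refine ⟨?_, ?_⟩
        · rw [hmem]
          push_neg
          exact ⟨fun j hj hPe => hnotmul P (by omega) (by omega) ⟨j, hj, hPe⟩, by omega⟩
        · intro t ht htne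
          have := hmin t ht htne
          rw [hmem]
          exact Or.inr (by omega)
      · refine ⟨?_, ?_⟩
        · rw [hmem]
          push_neg
          refine ⟨?_, by omega⟩
          rintro j hj rfl
          have := hmul_le j hj
          omega
        · intro t ht htne
          have := hmin t ht htne
          rw [hmem]
          exact Or.inr (by omega)
  refine ⟨hset, ?_, ?_⟩
  · rw [hset, Set.ncard_union_eq, ← Finset.coe_Icc, ← Finset.coe_Icc,
      Set.ncard_coe_finset, Set.ncard_coe_finset, Nat.card_Icc, Nat.card_Icc]
    · omega
    · rw [Set.disjoint_left]
      intro a ha hb'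
      rw [Set.mem_Icc] at ha hb'
      omega
  · constructor
    · show (k + 1) * m + s ∉ S
      rw [hmem]
      push_neg
      refine ⟨?_, by omega⟩
      rintro j hj heq
      have := hmul_le j hj
      omega
    · intro n hn
      simp only [Set.mem_setOf_eq] at hn
      rw [hmem] at hn
      push_neg at hn
      omega
end

section
/- Let m ≥ 2, k ≥ 1, 1 ≤ s ≤ m−1 and S = {0, m, 2m, ..., km} ∪ {n : n ≥ km+s+1}. For x, y in the void M(S) with x ≤ y, x ≼ y (i.e., y − x ∈ S) holds if and only if m divides y − x. -/
theorem stmt_16 (m k s : ℕ) (hm : 2 ≤ m) (hk : 1 ≤ k) (hs1 : 1 ≤ s) (hs2 : s ≤ m - 1)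
    (S : Set ℕ)
    (hS : S = {n : ℕ | ∃ j ≤ k, n = j * m} ∪ {n : ℕ | k * m + s + 1 ≤ n}) :
    ∀ x y : ℕ, x ∈ {z : ℕ | z ∉ S ∧ (k * m + s) - z ∉ S} →
      y ∈ {z : ℕ | z ∉ S ∧ (k * m + s) - z ∉ S} → x ≤ y →
      ((y - x ∈ S) ↔ m ∣ (y - x)) := by
  subst hS
  intro x y hx hy hxy
  simp only [Set.mem_setOf_eq, Set.mem_union, not_or, not_exists, not_le] at hx hy ⊢
  obtain ⟨⟨hx1, hx1'⟩, _⟩ := hx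
  obtain ⟨⟨hy1, hy1'⟩, _⟩ := hy
  -- x ≥ 1
  have hx0 : 1 ≤ x := by
    rcases Nat.eq_zero_or_pos x with h | h
    · exact absurd ⟨Nat.zero_le k, by simp [h]⟩ (hx1 0)
    · exact h
  -- y ≤ k*m + s
  have hyle : y ≤ k * m + s := by omega
  have hd : y - x ≤ k * m + s - 1 := by omega
  constructor
  · rintro (⟨j, hj, hjm⟩ | h)
    · exact ⟨j, by rw [hjm, mul_comm]⟩
    · omega
  · rintro ⟨d, hdm⟩
    left
    refine ⟨d, ?_, by rw [hdm, mul_comm]⟩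
    by_contra h
    push_neg at h
    have hge : k * m + m ≤ m * d := by
      calc k * m + m = m * (k + 1) := by ring
        _ ≤ m * d := Nat.mul_le_mul_left m (by omega)
    omega
end

section
/- Let S be a numerical semigroup with multiplicity m, Frobenius number F, and depth 2 (i.e., m ≤ F < 2m). If T is a numerical set with S ⊆ T and T + S ⊆ T, then every hook length of λ(T) that exceeds F − m arises from a box (u,x) with u ∈ T, x ∉ T, u < m, and x > F − m. Moreover, when T = S, the hook lengths of λ(S) exceeding F − m are exactly {x : x ∉ S, F − m < x ≤ F}, with no repetition. -/
theorem stmt_17 (S T : Set ℕ) (m F : ℕ)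
    (h0 : 0 ∈ S) (hadd : ∀ a ∈ S, ∀ b ∈ S, a + b ∈ S)
    (hfin : {n : ℕ | n ∉ S}.Finite)
    (hm : IsLeast {n : ℕ | n ∈ S ∧ 0 < n} m)
    (hF : IsGreatest {n : ℕ | n ∉ S} F)
    (hdepth : m ≤ F ∧ F < 2 * m)
    (hST : S ⊆ T)
    (hclosed : ∀ t ∈ T, ∀ s ∈ S, t + s ∈ T) :
    (∀ u x : ℕ, u ∈ T → x ∉ T → u < x → F - m < x - u → u < m ∧ F - m < x) ∧
    ({d : ℕ | ∃ u ∈ S, ∃ x : ℕ, x ∉ S ∧ u < x ∧ d = x - u ∧ F - m < d} =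
      {x : ℕ | x ∉ S ∧ F - m < x ∧ x ≤ F}) ∧
    (∀ u₁ x₁ u₂ x₂ : ℕ, u₁ ∈ S → x₁ ∉ S → u₁ < x₁ → u₂ ∈ S → x₂ ∉ S → u₂ < x₂ →
      F - m < x₁ - u₁ → x₁ - u₁ = x₂ - u₂ → u₁ = u₂ ∧ x₁ = x₂) := by
  obtain ⟨⟨hmS, hmpos⟩, hmmin⟩ := hm
  obtain ⟨hFnot, hFmax⟩ := hF
  have key : ∀ u x : ℕ, u ∈ S → x ∉ S → u < x → F - m < x - u → u = 0 := by
    intro u x hu hx hux hd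
    have hxF : x ≤ F := hFmax hx
    by_contra h
    have : m ≤ u := hmmin ⟨hu, Nat.pos_of_ne_zero h⟩
    omega
  refine ⟨?_, ?_, ?_⟩
  · intro u x hu hx hux hd
    have hxS : x ∉ S := fun h => hx (hST h)
    have hxF : x ≤ F := hFmax hxS
    constructor
    · by_contra h
      push_neg at h
      omega
    · omega
  · ext d
    simp only [Set.mem_setOf_eq]
    constructor
    · rintro ⟨u, hu, x, hx, hux, rfl, hd⟩
      have hu0 := key u x hu hx hux hd
      subst hu0
      exact ⟨by simpa using hx, hd, by have := hFmax hx; omega⟩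
    · rintro ⟨hd, h1, h2⟩
      exact ⟨0, h0, d, hd, by omega, by omega, h1⟩
  · intro u₁ x₁ u₂ x₂ h1 h2 h3 h4 h5 h6 hd heq
    have e1 := key u₁ x₁ h1 h2 h3 hd
    have e2 := key u₂ x₂ h4 h5 h6 (by omega)
    omega
end

section
/- Let S be a numerical semigroup with Frobenius number F and let T = S ∪ I where I ⊆ M(S) is an order ideal of the void poset. Then the dual T* = {x ∈ ℤ : F − x ∉ T} equals S ∪ I*, where I* = {x ∈ M(S) : F − x ∉ I}; moreover I* is also an order ideal of (M(S), ≼). -/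
theorem stmt_18 (S : Set ℕ) (F : ℕ) (I : Set ℕ)
    (h0 : 0 ∈ S) (hadd : ∀ a ∈ S, ∀ b ∈ S, a + b ∈ S)
    (hfin : {n : ℕ | n ∉ S}.Finite)
    (hF : IsGreatest {n : ℕ | n ∉ S} F)
    (hIM : I ⊆ {x : ℕ | x ∉ S ∧ F - x ∉ S})
    (hideal : ∀ x ∈ I, ∀ y ∈ {x : ℕ | x ∉ S ∧ F - x ∉ S},
      x ≤ y → y - x ∈ S → y ∈ I) :
    {x : ℤ | ¬ ∃ n ∈ S ∪ I, (n : ℤ) = (F : ℤ) - x} =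
      (fun n : ℕ => (n : ℤ)) ''
        (S ∪ {x : ℕ | x ∈ {y : ℕ | y ∉ S ∧ F - y ∉ S} ∧ F - x ∉ I}) ∧
    (∀ x ∈ {x : ℕ | x ∈ {y : ℕ | y ∉ S ∧ F - y ∉ S} ∧ F - x ∉ I},
      ∀ y ∈ {y : ℕ | y ∉ S ∧ F - y ∉ S}, x ≤ y → y - x ∈ S →
        y ∈ {x : ℕ | x ∈ {y : ℕ | y ∉ S ∧ F - y ∉ S} ∧ F - x ∉ I}) := by
  have hS_big : ∀ n : ℕ, F < n → n ∈ S := by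
    intro n hn
    by_contra h
    exact absurd (hF.2 h) (not_le.mpr hn)
  have hle : ∀ x : ℕ, x ∉ S → x ≤ F := fun x hx => hF.2 hx
  constructor
  · ext x
    simp only [Set.mem_setOf_eq, Set.mem_image, Set.mem_union]
    constructor
    · intro hx
      by_cases hx0 : 0 ≤ x
      · lift x to ℕ using hx0 with a
        refine ⟨a, ?_, rfl⟩
        by_cases haF : a ≤ F
        · by_cases haS : a ∈ S
          · exact Or.inl haS
          · right
            have hcast : ((F - a : ℕ) : ℤ) = (F : ℤ) - (a : ℤ) := by
              push_cast [Nat.cast_sub haF]; ring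
            refine ⟨⟨haS, ?_⟩, ?_⟩
            · intro hm
              exact hx ⟨F - a, Or.inl hm, hcast⟩
            · intro hm
              exact hx ⟨F - a, Or.inr hm, hcast⟩
        · exact Or.inl (hS_big a (not_le.mp haF))
      · exfalso
        push_neg at hx0
        refine hx ⟨(F - x).toNat, Or.inl (hS_big _ ?_), ?_⟩
        · omega
        · rw [Int.toNat_of_nonneg (by omega)]
    · rintro ⟨a, ha, rfl⟩ ⟨n, hn, hnx⟩
      have hna : n + a = F := by exact_mod_cast (by linarith : (n : ℤ) + a = F)
      have haF : a ≤ F := by omega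
      have hnFa : n = F - a := by omega
      rcases ha with haS | ⟨⟨haS, hFaS⟩, hFaI⟩
      · rcases hn with hnS | hnI
        · exact hF.1 (hna ▸ hadd n hnS a haS)
        · have := (hIM hnI).2
          rw [hnFa, Nat.sub_sub_self haF] at this
          exact this haS
      · rcases hn with hnS | hnI
        · exact hFaS (hnFa ▸ hnS)
        · exact hFaI (hnFa ▸ hnI)
  · rintro x ⟨⟨hxS, hxFS⟩, hxFI⟩ y ⟨hyS, hyFS⟩ hxy hyx
    have hxF : x ≤ F := hle x hxS
    have hyF : y ≤ F := hle y hyS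
    refine ⟨⟨hyS, hyFS⟩, ?_⟩
    intro hFyI
    apply hxFI
    have heq : (F - x) - (F - y) = y - x := by omega
    exact hideal (F - y) hFyI (F - x)
      ⟨hxFS, by rwa [Nat.sub_sub_self hxF]⟩
      (Nat.sub_le_sub_left hxy F) (heq ▸ hyx)
end
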